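/- arXiv:1511.06074 — 2 statements merged into one kernel-verified Lean document; each statement's English description precedes it below -/
import Mathlib

section
/- For real parameters a > 0, b > 1, a natural number n ≥ 1, and real ρ with 0 < ρ < 1, the double series Σ_{k≥1} ((-1)^{k-1}/k) (ρ^k/k!) Σ_{i=0}^{k-1} (-1)^i binom(k-1, i) Π_{j=-i}^{k-i-1} (n+j)(a+n+j-1)/(a+b+2n+j-2) can be rewritten, after interchanging summations and reindexing, as Σ_{i=0}^{n-1} Σ_{k≥0} ((-1)^k/(k+i+1)) (ρ^{k+i+1}/(k+i+1)!) binom(k+i, i) Π_{j=n-i}^{k+n} j(a+j-1)/(a+b+n+j-2). -/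
open scoped BigOperators

noncomputable def poch (x : ℝ) (k : ℕ) : ℝ := (ascPochhammer ℝ k).eval x

noncomputable def hyp2F1 (a b c z : ℝ) : ℝ :=
  ∑' k : ℕ, poch a k * poch b k / (poch c k * (Nat.factorial k)) * z ^ k

noncomputable def jacobiP (q : ℕ) (α β : ℝ) (x : ℝ) : ℝ :=
  poch (α + 1) q / (Nat.factorial q) *
    ∑ k ∈ Finset.range (q + 1),
      poch (-(q : ℝ)) k * poch ((q : ℝ) + α + β + 1) k / (poch (α + 1) k * (Nat.factorial k)) *
        ((1 - x) / 2) ^ k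

noncomputable def laguerreL (q : ℕ) (α : ℝ) (x : ℝ) : ℝ :=
  ∑ k ∈ Finset.range (q + 1),
    (-1 : ℝ) ^ k * (Real.Gamma ((q : ℝ) + α + 1) /
      (Real.Gamma (α + (k : ℝ) + 1) * (Nat.factorial (q - k)))) * x ^ k / (Nat.factorial k)


/-!
Write the product factor as `f x = x * (a + x - 1) / (a + b + n + x - 2)`. Since `f 0 = 0`,
the inner summand of row `m` vanishes for `n ≤ i ≤ m`, because its product then runs through
the factor `f 0`. Each row is therefore a sum over the fixed finite range `i < n`, and the outer
series splits into `n` column series `k ↦ term (k + i) i`, which are reindexed products over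
`Icc (n - i) (n + k)`. The column series converge absolutely: as `|f x| ≤ x` for `x ≥ 1`, the
product is at most an ascending factorial, which cancels the `(k + i + 1)!` and leaves terms of
size `O((k + n).choose n * |ρ| ^ k)`.
-/

open Finset
open scoped Nat

section Rearrangement

variable {M : Type*} [AddCommMonoid M]

theorem sum_range_succ_eq_sum_range_ite {u : ℕ → M} {m n : ℕ}
    (hu : ∀ i, n ≤ i → i ≤ m → u i = 0) :
    ∑ i ∈ range (m + 1), u i = ∑ i ∈ range n, if i ≤ m then u i else 0 := by
  rw [← sum_filter, ← sum_filter_of_ne (p := (· < n))]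
  · congr 1
    ext i
    simp only [mem_filter, mem_range]
    omega
  · intro i hi hui
    by_contra hni
    exact hui (hu i (not_lt.1 hni) (Nat.lt_succ_iff.1 (mem_range.1 hi)))

variable [TopologicalSpace M]

theorem tsum_ite_le_eq_tsum_add (u : ℕ → M) (i : ℕ) :
    ∑' m, (if i ≤ m then u m else 0) = ∑' k, u (k + i) := by
  rw [← (add_left_injective i).tsum_eq]
  · exact tsum_congr fun k => if_pos (Nat.le_add_left i k)
  · intro m hm
    by_cases him : i ≤ m
    · exact ⟨m - i, Nat.sub_add_cancel him⟩
    · exact absurd (if_neg him) hm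

theorem summable_ite_le_iff (u : ℕ → M) (i : ℕ) :
    Summable (fun m => if i ≤ m then u m else 0) ↔ Summable fun k => u (k + i) := by
  rw [← (add_left_injective i).summable_iff]
  · exact summable_congr fun k => if_pos (Nat.le_add_left i k)
  · intro m hm
    have him : ¬i ≤ m := fun him => hm ⟨m - i, Nat.sub_add_cancel him⟩
    exact if_neg him

variable [ContinuousAdd M] [T2Space M]

theorem tsum_sum_range_succ_eq_sum_tsum {u : ℕ → ℕ → M} {n : ℕ}
    (hu : ∀ m i, n ≤ i → i ≤ m → u m i = 0) (hs : ∀ i < n, Summable fun k => u (k + i) i) :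
    ∑' m, ∑ i ∈ range (m + 1), u m i = ∑ i ∈ range n, ∑' k, u (k + i) i := by
  simp_rw [sum_range_succ_eq_sum_range_ite (hu _)]
  rw [Summable.tsum_finsetSum fun i hi =>
    (summable_ite_le_iff (u · i) i).2 (hs i (mem_range.1 hi))]
  exact sum_congr rfl fun i _ => tsum_ite_le_eq_tsum_add (u · i) i

end Rearrangement

theorem Nat.choose_add_mul_choose_le (n i k : ℕ) :
    (k + i).choose i * (n + k).choose (k + i + 1) ≤ n.choose (i + 1) * (k + n).choose n := by
  rcases lt_or_ge i n with hin | hni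
  · calc (k + i).choose i * (n + k).choose (k + i + 1)
        ≤ (k + i + 1).choose k * (n + k).choose (k + i + 1) := by
          gcongr
          rw [Nat.choose_symm_of_eq_add (show k + i + 1 = k + (i + 1) by omega),
            Nat.choose_succ_succ']
          exact le_self_add
      -- choosing `k` elements inside `k + i + 1` out of `n + k`, in either order
      _ = n.choose (i + 1) * (k + n).choose n := by
          rw [mul_comm, Nat.choose_mul (by omega), Nat.add_sub_cancel,
            show k + i + 1 - k = i + 1 by omega, add_comm n k, Nat.choose_symm_add, mul_comm]
  · rw [Nat.choose_eq_zero_of_lt (n := n + k) (by omega), mul_zero]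
    exact Nat.zero_le _

theorem prod_range_eq_zero_of_map_zero {M : Type*} [CommMonoidWithZero M] {f : ℝ → M}
    (hf : f 0 = 0) {n i m : ℕ} (hni : n ≤ i) (him : i ≤ m) :
    ∏ t ∈ range (m + 1), f (n + t - i) = 0 :=
  prod_eq_zero (mem_range.2 (show i - n < m + 1 by omega)) (by
    rw [Nat.cast_sub hni, add_sub_cancel, sub_self, hf])

theorem prod_range_add_sub_eq_prod_Icc {M : Type*} [CommMonoid M] (f : ℝ → M) {n i : ℕ}
    (hi : i ≤ n) (k : ℕ) :
    ∏ t ∈ range (k + i + 1), f (n + t - i) = ∏ j ∈ Icc (n - i) (n + k), f j := by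
  rw [← Ico_add_one_right_eq_Icc, prod_Ico_eq_prod_range,
    show n + k + 1 - (n - i) = k + i + 1 by omega]
  refine prod_congr rfl fun t _ => ?_
  rw [Nat.cast_add, Nat.cast_sub hi]
  ring_nf

theorem abs_prod_range_le_ascFactorial {f : ℝ → ℝ} (hf : ∀ x, 1 ≤ x → |f x| ≤ x) {s : ℕ}
    (hs : 1 ≤ s) (K : ℕ) : |∏ t ∈ range K, f (s + t)| ≤ s.ascFactorial K := by
  rw [abs_prod, Nat.ascFactorial_eq_prod_range, Nat.cast_prod]
  refine prod_le_prod (fun _ _ => abs_nonneg _) fun t _ => ?_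
  push_cast
  exact hf _ (by norm_cast; omega)

noncomputable def doubleSeriesTerm (f : ℝ → ℝ) (ρ : ℝ) (n m i : ℕ) : ℝ :=
  (-1 : ℝ) ^ m / (m + 1) * (ρ ^ (m + 1) / (m + 1)!) *
    ((-1 : ℝ) ^ i * m.choose i * ∏ t ∈ range (m + 1), f (n + t - i))

section DoubleSeriesTerm

variable {f : ℝ → ℝ} {ρ : ℝ} {n i : ℕ}

theorem doubleSeriesTerm_add (hi : i ≤ n) (k : ℕ) :
    doubleSeriesTerm f ρ n (k + i) i =
      (-1 : ℝ) ^ k / (k + i + 1) * (ρ ^ (k + i + 1) / (k + i + 1)!) * (k + i).choose i *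
        ∏ j ∈ Icc (n - i) (n + k), f j := by
  have hsign : (-1 : ℝ) ^ (k + i) * (-1) ^ i = (-1) ^ k := by
    rw [pow_add, mul_assoc, ← pow_add, ← two_mul, pow_mul, neg_one_sq, one_pow, mul_one]
  rw [doubleSeriesTerm, prod_range_add_sub_eq_prod_Icc f hi, ← hsign]
  push_cast
  ring

theorem abs_prod_range_add_sub_le (hf : ∀ x, 1 ≤ x → |f x| ≤ x) (hi : i < n) (k : ℕ) :
    |∏ t ∈ range (k + i + 1), f (n + t - i)| ≤ (k + i + 1)! * (n + k).choose (k + i + 1) := by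
  have key := abs_prod_range_le_ascFactorial hf (s := n - i) (by omega) (k + i + 1)
  rw [Nat.ascFactorial_eq_factorial_mul_choose', show n - i + (k + i + 1) - 1 = n + k by omega,
    Nat.cast_sub hi.le] at key
  push_cast at key
  convert key using 4 with t
  ring

theorem abs_doubleSeriesTerm_add_le (hf : ∀ x, 1 ≤ x → |f x| ≤ x) (hi : i < n) (k : ℕ) :
    |doubleSeriesTerm f ρ n (k + i) i| ≤
      n.choose (i + 1) * |ρ| ^ (i + 1) * ((k + n).choose n * |ρ| ^ k) := by
  have hprod := abs_prod_range_add_sub_le hf hi k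
  have hchoose : ((k + i).choose i * (n + k).choose (k + i + 1) : ℝ) ≤
      n.choose (i + 1) * (k + n).choose n := by
    exact_mod_cast Nat.choose_add_mul_choose_le n i k
  have hdenom : (1 : ℝ) ≤ (k + i : ℕ) + 1 := le_add_of_nonneg_left (Nat.cast_nonneg _)
  simp only [doubleSeriesTerm, abs_mul, abs_div, abs_pow, abs_neg, abs_one, one_pow, one_mul,
    Nat.abs_cast, abs_of_pos (zero_lt_one.trans_le hdenom)]
  calc 1 / ((k + i : ℕ) + 1 : ℝ) * (|ρ| ^ (k + i + 1) / (k + i + 1)!) *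
        ((k + i).choose i * |∏ t ∈ range (k + i + 1), f (n + t - i)|)
      ≤ 1 * (|ρ| ^ (k + i + 1) / (k + i + 1)!) *
        ((k + i).choose i * ((k + i + 1)! * (n + k).choose (k + i + 1))) := by
        gcongr
        exact div_le_one_of_le₀ hdenom (by positivity)
    _ = |ρ| ^ (k + i + 1) * ((k + i).choose i * (n + k).choose (k + i + 1) : ℝ) := by
        field_simp
    _ ≤ |ρ| ^ (k + i + 1) * (n.choose (i + 1) * (k + n).choose n) := by gcongr
    _ = _ := by ring

theorem summable_doubleSeriesTerm_add (hf : ∀ x, 1 ≤ x → |f x| ≤ x) (hρ : |ρ| < 1)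
    (hi : i < n) : Summable fun k => doubleSeriesTerm f ρ n (k + i) i := by
  have hmajorant : Summable fun k : ℕ => ((k + n).choose n : ℝ) * |ρ| ^ k :=
    summable_choose_mul_geometric_of_norm_lt_one n (by rwa [Real.norm_eq_abs, abs_abs])
  exact Summable.of_norm_bounded (hmajorant.mul_left _) (abs_doubleSeriesTerm_add_le hf hi)

theorem tsum_sum_doubleSeriesTerm (hf0 : f 0 = 0) (hf : ∀ x, 1 ≤ x → |f x| ≤ x)
    (hρ : |ρ| < 1) (n : ℕ) :
    ∑' m, ∑ i ∈ range (m + 1), doubleSeriesTerm f ρ n m i =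
      ∑ i ∈ range n, ∑' k,
        (-1 : ℝ) ^ k / (k + i + 1) * (ρ ^ (k + i + 1) / (k + i + 1)!) * (k + i).choose i *
          ∏ j ∈ Icc (n - i) (n + k), f j := by
  rw [tsum_sum_range_succ_eq_sum_tsum (fun m i hni him => ?_)
    fun i hi => summable_doubleSeriesTerm_add hf hρ hi]
  · exact sum_congr rfl fun i hi => tsum_congr (doubleSeriesTerm_add (mem_range.1 hi).le)
  · rw [doubleSeriesTerm, prod_range_eq_zero_of_map_zero hf0 hni him, mul_zero, mul_zero]

end DoubleSeriesTerm

/-- The outer series over `k ≥ 1` is written with `k = m + 1`, and the integer product index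
`j ∈ {-i, …, k - i - 1}` of the left-hand side as `j = t - i` with `t ∈ range k`. -/
theorem capacity_series_rearrangement_general (a b : ℝ) (ha : 0 < a) (hb : 1 < b)
    (n : ℕ) (ρ : ℝ) (hρ0 : 0 < ρ) (hρ1 : ρ < 1) :
    (∑' m : ℕ,
        (-1 : ℝ) ^ m / (m + 1) * (ρ ^ (m + 1) / (Nat.factorial (m + 1))) *
          ∑ i ∈ Finset.range (m + 1),
            (-1 : ℝ) ^ i * (Nat.choose m i) *
              ∏ t ∈ Finset.range (m + 1),
                ((n : ℝ) + t - i) * (a + n + t - i - 1) / (a + b + 2 * n + t - i - 2)) =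
      ∑ i ∈ Finset.range n,
        ∑' k : ℕ,
          (-1 : ℝ) ^ k / (k + i + 1) * (ρ ^ (k + i + 1) / (Nat.factorial (k + i + 1))) *
            (Nat.choose (k + i) i) *
            ∏ j ∈ Finset.Icc (n - i) (n + k),
              (j : ℝ) * (a + j - 1) / (a + b + n + j - 2) := by
  set f : ℝ → ℝ := fun x => x * (a + x - 1) / (a + b + n + x - 2) with hf_def
  have hf_le : ∀ x, 1 ≤ x → |f x| ≤ x := fun x hx => by
    have hden : a + x - 1 < a + b + n + x - 2 := by linarith [(Nat.cast_nonneg n : (0 : ℝ) ≤ n)]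
    rw [abs_of_nonneg (div_nonneg (by nlinarith) (by linarith)), div_le_iff₀ (by linarith)]
    nlinarith
  have hfactor : ∀ t i : ℕ,
      ((n : ℝ) + t - i) * (a + n + t - i - 1) / (a + b + 2 * n + t - i - 2) = f (n + t - i) :=
    fun t i => by
      simp only [hf_def]
      ring_nf
  simp only [hfactor, mul_sum]
  exact tsum_sum_doubleSeriesTerm (by simp [hf_def]) hf_le (abs_lt.2 ⟨by linarith, hρ1⟩) n

/-- Rearrangement of the double series appearing in the ergodic capacity:
interchanging the summations and reindexing `k ↦ k + i + 1` (the original outer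
series is over `k ≥ 1`, written below with index shift `k = m+1`; in the inner
product of the left-hand side, `j` runs over the integers `-i, …, k-i-1`,
written via `j = t - i` with `t ∈ {0,…,k-1}`). -/
theorem capacity_series_rearrangement (a b : ℝ) (ha : 0 < a) (hb : 1 < b)
    (n : ℕ) (hn : 1 ≤ n) (ρ : ℝ) (hρ0 : 0 < ρ) (hρ1 : ρ < 1) :
    (∑' m : ℕ,
        (-1 : ℝ) ^ m / (m + 1) * (ρ ^ (m + 1) / (Nat.factorial (m + 1))) *
          ∑ i ∈ Finset.range (m + 1),
            (-1 : ℝ) ^ i * (Nat.choose m i) *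
              ∏ t ∈ Finset.range (m + 1),
                ((n : ℝ) + t - i) * (a + n + t - i - 1) / (a + b + 2 * n + t - i - 2)) =
      ∑ i ∈ Finset.range n,
        ∑' k : ℕ,
          (-1 : ℝ) ^ k / (k + i + 1) * (ρ ^ (k + i + 1) / (Nat.factorial (k + i + 1))) *
            (Nat.choose (k + i) i) *
            ∏ j ∈ Finset.Icc (n - i) (n + k),
              (j : ℝ) * (a + j - 1) / (a + b + n + j - 2) :=
  capacity_series_rearrangement_general a b ha hb n ρ hρ0 hρ1
end

section
/- For integers m, m_t, m_r with m_t, m_r ≤ m and m < m_r + m_t, the ergodic capacity of the Jacobi MIMO channel satisfies C(m_t, m_r, m, ρ) = (m_t + m_r - m) C(1,1,1,ρ) + C(m - m_r, m - m_t, m, ρ), where C(1,1,1,ρ) = ln(1+ρ). -/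
open scoped BigOperators

open MeasureTheory
open scoped Matrix

noncomputable instance matrixMeasurableSpace (m : ℕ) : MeasurableSpace (Matrix (Fin m) (Fin m) ℂ) :=
  (inferInstance : MeasurableSpace (Fin m → Fin m → ℂ))

/-- The `r × t` upper-left corner of an `m × m` matrix. -/
noncomputable def upperLeftCorner (m t r : ℕ) (ht : t ≤ m) (hr : r ≤ m)
    (U : Matrix (Fin m) (Fin m) ℂ) : Matrix (Fin r) (Fin t) ℂ :=
  Matrix.of fun i j => U (Fin.castLE hr i) (Fin.castLE ht j)

/-- The ergodic capacity `C(m_t, m_r, m, ρ) = E[ln det(I + ρ H†H)]`, where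
`H` is the `m_r × m_t` upper-left corner of `U` and the expectation is over the
measure `μ` on the `m × m` complex matrices. -/
noncomputable def ergCap (m : ℕ) (μ : Measure (Matrix (Fin m) (Fin m) ℂ)) (ρ : ℝ)
    (t r : ℕ) (ht : t ≤ m) (hr : r ≤ m) : ℝ :=
  ∫ U, Real.log
      ((1 + (ρ : ℂ) •
          ((upperLeftCorner m t r ht hr U)ᴴ * upperLeftCorner m t r ht hr U)).det.re) ∂μ

/-!
Write the unitary `U` in blocks `[[A, B], [C, D]]`, where `A = H` is the `m_r × m_t` corner.
Unitarity gives `AᴴA = 1 - CᴴC` and `CCᴴ = 1 - DDᴴ`, and the rectangular Sylvester identity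
`X^(m - m_r) χ_{CᴴC}(X) = X^(m_t) χ_{CCᴴ}(X)`, evaluated at `1 + ρ` after scaling by `ρ`, turns
this into the pointwise identity `ln det(1 + ρAᴴA) = (m_t + m_r - m) ln(1 + ρ) + ln det(1 + ρDDᴴ)`.
The Haar measure is invariant under `U ↦ Uᴴ` (by Fubini, a left-invariant and a right-invariant
probability measure on the unitary group coincide) and under permutations of rows and columns,
so `Dᴴ` has the law of the `(m - m_t) × (m - m_r)` corner. Integrability is automatic: the
integrand is continuous and the unitary group is compact.
-/

open Matrix

section Blocks

variable {R ι ι' κ κ' : Type*}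

theorem conjTranspose_toBlocks₁₁_mul_add_conjTranspose_toBlocks₂₁_mul_eq_one [Fintype ι]
    [Fintype ι'] [DecidableEq κ] [DecidableEq κ'] [Semiring R] [Star R]
    {V : Matrix (ι ⊕ ι') (κ ⊕ κ') R} (hV : Vᴴ * V = 1) :
    V.toBlocks₁₁ᴴ * V.toBlocks₁₁ + V.toBlocks₂₁ᴴ * V.toBlocks₂₁ = 1 := by
  rw [← fromBlocks_toBlocks V, fromBlocks_conjTranspose, fromBlocks_multiply, ← fromBlocks_one,
    fromBlocks_inj] at hV
  exact hV.1

theorem toBlocks₂₁_mul_conjTranspose_add_toBlocks₂₂_mul_conjTranspose_eq_one [Fintype κ]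
    [Fintype κ'] [DecidableEq ι] [DecidableEq ι'] [Semiring R] [Star R]
    {V : Matrix (ι ⊕ ι') (κ ⊕ κ') R} (hV : V * Vᴴ = 1) :
    V.toBlocks₂₁ * V.toBlocks₂₁ᴴ + V.toBlocks₂₂ * V.toBlocks₂₂ᴴ = 1 := by
  rw [← fromBlocks_toBlocks V, fromBlocks_conjTranspose, fromBlocks_multiply, ← fromBlocks_one,
    fromBlocks_inj] at hV
  exact hV.2.2.2

theorem det_one_add_smul_conjTranspose_mul_toBlocks₁₁_mul_pow [Fintype ι] [Fintype ι']
    [Fintype κ] [Fintype κ'] [DecidableEq ι] [DecidableEq ι'] [DecidableEq κ] [DecidableEq κ']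
    [CommRing R] [Star R] {V : Matrix (ι ⊕ ι') (κ ⊕ κ') R} (hV₁ : Vᴴ * V = 1)
    (hV₂ : V * Vᴴ = 1) (ρ : R) :
    (1 + ρ • (V.toBlocks₁₁ᴴ * V.toBlocks₁₁)).det * (1 + ρ) ^ Fintype.card ι' =
      (1 + ρ) ^ Fintype.card κ * (1 + ρ • (V.toBlocks₂₂ * V.toBlocks₂₂ᴴ)).det := by
  set C := V.toBlocks₂₁
  have hA : V.toBlocks₁₁ᴴ * V.toBlocks₁₁ = 1 - Cᴴ * C :=
    eq_sub_of_add_eq (conjTranspose_toBlocks₁₁_mul_add_conjTranspose_toBlocks₂₁_mul_eq_one hV₁)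
  have hD : V.toBlocks₂₂ * V.toBlocks₂₂ᴴ = 1 - C * Cᴴ :=
    eq_sub_of_add_eq' (toBlocks₂₁_mul_conjTranspose_add_toBlocks₂₂_mul_conjTranspose_eq_one hV₂)
  have sylvester := congrArg (Polynomial.eval (1 + ρ)) (charpoly_mul_comm' (ρ • C) Cᴴ)
  simp only [Polynomial.eval_mul, Polynomial.eval_pow, Polynomial.eval_X, eval_charpoly,
    Matrix.smul_mul, Matrix.mul_smul, scalar_apply, ← smul_one_eq_diagonal] at sylvester
  rw [hA, hD, mul_comm]
  convert sylvester.symm using 3 <;> module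

end Blocks

noncomputable def capacityIntegrand {ι κ : Type*} [Fintype ι] [Fintype κ] [DecidableEq κ]
    (ρ : ℝ) (H : Matrix ι κ ℂ) : ℝ :=
  Real.log (1 + (ρ : ℂ) • (Hᴴ * H)).det.re

section CapacityIntegrand

open scoped ComplexOrder

variable {ι ι' κ κ' : Type*} [Fintype ι] [Fintype κ] [DecidableEq κ]

theorem re_det_one_add_smul_conjTranspose_mul_self_pos (H : Matrix ι κ ℂ) {ρ : ℝ} (hρ : 0 ≤ ρ) :
    0 < (1 + (ρ : ℂ) • (Hᴴ * H)).det.re := by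
  have hpsd : ((ρ : ℂ) • (Hᴴ * H)).PosSemidef :=
    (posSemidef_conjTranspose_mul_self H).smul (Complex.zero_le_real.mpr hρ)
  exact (Complex.pos_iff.mp (PosDef.one.add_posSemidef hpsd).det_pos).1

theorem continuous_capacityIntegrand {ρ : ℝ} (hρ : 0 ≤ ρ) :
    Continuous (capacityIntegrand ρ : Matrix ι κ ℂ → ℝ) := by
  refine Continuous.log ?_ fun H => (re_det_one_add_smul_conjTranspose_mul_self_pos H hρ).ne'
  fun_prop

theorem capacityIntegrand_toBlocks₁₁_add [Fintype ι'] [Fintype κ'] [DecidableEq ι]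
    [DecidableEq ι'] [DecidableEq κ'] {V : Matrix (ι ⊕ ι') (κ ⊕ κ') ℂ} (hV₁ : Vᴴ * V = 1)
    (hV₂ : V * Vᴴ = 1) {ρ : ℝ} (hρ : 0 ≤ ρ) :
    capacityIntegrand ρ V.toBlocks₁₁ + Fintype.card ι' * Real.log (1 + ρ) =
      Fintype.card κ * Real.log (1 + ρ) + capacityIntegrand ρ V.toBlocks₂₂ᴴ := by
  have hdet := congrArg Complex.re
    (det_one_add_smul_conjTranspose_mul_toBlocks₁₁_mul_pow hV₁ hV₂ (ρ : ℂ))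
  have hcast (k : ℕ) : (1 + (ρ : ℂ)) ^ k = ((1 + ρ) ^ k : ℝ) := by push_cast; ring
  rw [hcast, hcast, Complex.re_mul_ofReal, Complex.re_ofReal_mul] at hdet
  unfold capacityIntegrand
  rw [← Real.log_pow, ← Real.log_pow,
    ← Real.log_mul (re_det_one_add_smul_conjTranspose_mul_self_pos _ hρ).ne' (by positivity),
    ← Real.log_mul (by positivity) (re_det_one_add_smul_conjTranspose_mul_self_pos _ hρ).ne',
    conjTranspose_conjTranspose, hdet]

end CapacityIntegrand

def finSumFinSubEquiv {r m : ℕ} (h : r ≤ m) : Fin r ⊕ Fin (m - r) ≃ Fin m :=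
  finSumFinEquiv.trans (finCongr (Nat.add_sub_cancel' h))

theorem capacityIntegrand_corner_add {m t r : ℕ} (ht : t ≤ m) (hr : r ≤ m)
    {U : Matrix (Fin m) (Fin m) ℂ} (hU : U ∈ unitaryGroup (Fin m) ℂ) {ρ : ℝ} (hρ : 0 ≤ ρ) :
    capacityIntegrand ρ (U.submatrix (Fin.castLEEmb hr) (Fin.castLEEmb ht)) +
        (m - r : ℕ) * Real.log (1 + ρ) =
      t * Real.log (1 + ρ) + capacityIntegrand ρ ((star U).submatrix
        (Function.Embedding.inr.trans (finSumFinSubEquiv ht).toEmbedding)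
        (Function.Embedding.inr.trans (finSumFinSubEquiv hr).toEmbedding)) := by
  set V := U.submatrix (finSumFinSubEquiv hr) (finSumFinSubEquiv ht)
  have hV₁ : Vᴴ * V = 1 := by
    rw [conjTranspose_submatrix, submatrix_mul_equiv, ← star_eq_conjTranspose,
      Unitary.star_mul_self_of_mem hU, submatrix_one_equiv]
  have hV₂ : V * Vᴴ = 1 := by
    rw [conjTranspose_submatrix, submatrix_mul_equiv, ← star_eq_conjTranspose,
      Unitary.mul_star_self_of_mem hU, submatrix_one_equiv]
  have h := capacityIntegrand_toBlocks₁₁_add hV₁ hV₂ hρ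
  rw [Fintype.card_fin, Fintype.card_fin] at h
  exact h

section Haar

variable {M : Type*} [Monoid M] [MeasurableSpace M] [MeasurableMul₂ M]

theorem eq_of_measurePreserving_mul_left_of_mul_right {G : Set M} {μ ν : Measure M}
    [IsProbabilityMeasure μ] [IsProbabilityMeasure ν] (hμ : ∀ᵐ x ∂μ, x ∈ G)
    (hν : ∀ᵐ x ∂ν, x ∈ G) (hμG : ∀ g ∈ G, MeasurePreserving (g * ·) μ μ)
    (hνG : ∀ g ∈ G, MeasurePreserving (· * g) ν ν) : μ = ν := by
  ext s hs
  have hS : MeasurableSet {p : M × M | p.1 * p.2 ∈ s} := measurable_mul hs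
  calc μ s = ∫⁻ _, μ s ∂ν := by simp
    _ = ∫⁻ g, μ ((g * ·) ⁻¹' s) ∂ν := lintegral_congr_ae <| hν.mono fun g hg =>
        ((hμG g hg).measure_preimage hs.nullMeasurableSet).symm
    _ = ν.prod μ {p | p.1 * p.2 ∈ s} := (Measure.prod_apply hS).symm
    _ = ∫⁻ g, ν ((· * g) ⁻¹' s) ∂μ := Measure.prod_apply_symm hS
    _ = ∫⁻ _, ν s ∂μ := lintegral_congr_ae <| hμ.mono fun g hg =>
        (hνG g hg).measure_preimage hs.nullMeasurableSet
    _ = ν s := by simp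

variable [StarMul M] {μ : Measure M} [IsProbabilityMeasure μ]

theorem measurePreserving_star_of_mul_left (hstar : Measurable (star : M → M))
    (hμ : ∀ᵐ x ∂μ, x ∈ unitary M) (hμG : ∀ g ∈ unitary M, MeasurePreserving (g * ·) μ μ) :
    MeasurePreserving star μ μ := by
  have hright (g : M) (hg : g ∈ unitary M) :
      MeasurePreserving (· * g) (μ.map star) (μ.map star) := by
    refine ⟨measurable_mul_const g, ?_⟩
    have hcomm : (· * g) ∘ star = star ∘ (star g * ·) := by
      funext x; simp [star_mul]
    rw [Measure.map_map (measurable_mul_const g) hstar, hcomm,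
      ← Measure.map_map hstar (measurable_const_mul _), (hμG _ (Unitary.star_mem hg)).map_eq]
  have : IsProbabilityMeasure (μ.map star) := Measure.isProbabilityMeasure_map hstar.aemeasurable
  refine ⟨hstar, (eq_of_measurePreserving_mul_left_of_mul_right hμ ?_ hμG hright).symm⟩
  exact (MeasurableEquiv.ofInvolutive star star_involutive hstar).measurableEmbedding.ae_map_iff.mpr
    (hμ.mono fun x hx => Unitary.star_mem hx)

theorem measurePreserving_mul_right_of_mul_left (hstar : Measurable (star : M → M))
    (hμ : ∀ᵐ x ∂μ, x ∈ unitary M) (hμG : ∀ g ∈ unitary M, MeasurePreserving (g * ·) μ μ)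
    {g : M} (hg : g ∈ unitary M) : MeasurePreserving (· * g) μ μ := by
  have hstarμ := measurePreserving_star_of_mul_left hstar hμ hμG
  have hcomp : (· * g) = star ∘ (star g * ·) ∘ star := by
    funext x; simp [star_mul]
  rw [hcomp]
  exact hstarμ.comp ((hμG _ (Unitary.star_mem hg)).comp hstarμ)

end Haar

theorem MeasureTheory.MeasurePreserving.integral_comp_of_aestronglyMeasurable {X Y E : Type*}
    [MeasurableSpace X] [MeasurableSpace Y] [NormedAddCommGroup E] [NormedSpace ℝ E]
    {μ : Measure X} {ν : Measure Y} {f : X → Y} (hf : MeasurePreserving f μ ν) {g : Y → E}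
    (hg : AEStronglyMeasurable g ν) : ∫ x, g (f x) ∂μ = ∫ y, g y ∂ν := by
  rw [← hf.map_eq] at hg ⊢
  exact (integral_map hf.measurable.aemeasurable hg).symm

theorem Continuous.integrable_of_ae_mem_isCompact {X E : Type*} [TopologicalSpace X]
    [MeasurableSpace X] [OpensMeasurableSpace X] [T2Space X] [NormedAddCommGroup E]
    {μ : Measure X} [IsFiniteMeasure μ] {K : Set X} (hK : IsCompact K) (hμK : ∀ᵐ x ∂μ, x ∈ K)
    {f : X → E} (hf : Continuous f) : Integrable f μ := by
  rw [← Measure.restrict_eq_self_of_ae_mem hμK]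
  exact hf.continuousOn.integrableOn_compact hK

theorem Function.Embedding.exists_perm_apply_eq {α β : Type*} [Fintype β] (f f' : α ↪ β) :
    ∃ σ : Equiv.Perm β, ∀ a, σ (f a) = f' a := by
  classical
  let e := (Equiv.ofInjective f f.injective).symm.trans (Equiv.ofInjective f' f'.injective)
  refine ⟨e.extendSubtype, fun a => ?_⟩
  rw [Equiv.extendSubtype_apply_of_mem e _ (Set.mem_range_self a)]
  simp [e]

theorem isCompact_unitaryGroup {n 𝕜 : Type*} [Fintype n] [DecidableEq n] [RCLike 𝕜] :
    IsCompact (unitaryGroup n 𝕜 : Set (Matrix n n 𝕜)) :=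
  (isCompact_univ_pi fun _ => isCompact_univ_pi fun _ => isCompact_closedBall (0 : 𝕜) 1)
    |>.of_isClosed_subset (isClosed_unitary (R := Matrix n n 𝕜)) fun U hU => by
      simpa using entry_norm_bound_of_unitary hU

theorem permMatrix_mem_unitaryGroup {n R : Type*} [Fintype n] [DecidableEq n] [CommRing R]
    [StarRing R] (σ : Equiv.Perm n) : σ.permMatrix R ∈ unitaryGroup n R := by
  rw [mem_unitaryGroup_iff', star_eq_conjTranspose, conjTranspose_permMatrix,
    ← permMatrix_mul, mul_inv_cancel, permMatrix_one]

theorem submatrix_eq_permMatrix_mul_mul {n R : Type*} [Fintype n] [DecidableEq n]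
    [NonAssocSemiring R]
    (U : Matrix n n R) (σ τ : Equiv.Perm n) :
    U.submatrix σ τ = σ.permMatrix R * U * τ⁻¹.permMatrix R := by
  rw [Equiv.Perm.permMatrix, Equiv.Perm.permMatrix, PEquiv.toMatrix_toPEquiv_mul,
    PEquiv.mul_toMatrix_toPEquiv, submatrix_submatrix]
  rfl

instance matrixBorelSpace (m : ℕ) : BorelSpace (Matrix (Fin m) (Fin m) ℂ) :=
  inferInstanceAs (BorelSpace (Fin m → Fin m → ℂ))

instance matrixSecondCountableTopology (m : ℕ) :
    SecondCountableTopology (Matrix (Fin m) (Fin m) ℂ) :=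
  inferInstanceAs (SecondCountableTopology (Fin m → Fin m → ℂ))

section UnitaryHaar

variable {m : ℕ} {μ : Measure (Matrix (Fin m) (Fin m) ℂ)} [IsProbabilityMeasure μ]

theorem measurePreserving_submatrix_perm (hsupp : ∀ᵐ U ∂μ, U ∈ unitaryGroup (Fin m) ℂ)
    (hinv : ∀ V ∈ unitaryGroup (Fin m) ℂ, MeasurePreserving (fun U => V * U) μ μ)
    (σ τ : Equiv.Perm (Fin m)) : MeasurePreserving (fun U => U.submatrix σ τ) μ μ := by
  have hcomp : (fun U : Matrix (Fin m) (Fin m) ℂ => U.submatrix σ τ) =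
      (· * τ⁻¹.permMatrix ℂ) ∘ (σ.permMatrix ℂ * ·) := by
    funext U; rw [submatrix_eq_permMatrix_mul_mul]; rfl
  rw [hcomp]
  exact (measurePreserving_mul_right_of_mul_left continuous_star.measurable hsupp hinv
    (permMatrix_mem_unitaryGroup _)).comp (hinv _ (permMatrix_mem_unitaryGroup σ))

theorem integral_star_submatrix_eq (hsupp : ∀ᵐ U ∂μ, U ∈ unitaryGroup (Fin m) ℂ)
    (hinv : ∀ V ∈ unitaryGroup (Fin m) ℂ, MeasurePreserving (fun U => V * U) μ μ)
    {ι κ : Type*} (f f' : ι ↪ Fin m) (g g' : κ ↪ Fin m) {F : Matrix ι κ ℂ → ℝ}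
    (hF : Continuous F) : ∫ U, F ((star U).submatrix f g) ∂μ = ∫ U, F (U.submatrix f' g') ∂μ := by
  obtain ⟨σ, hσ⟩ := f.exists_perm_apply_eq f'
  obtain ⟨τ, hτ⟩ := g.exists_perm_apply_eq g'
  have hF' : Continuous fun U : Matrix (Fin m) (Fin m) ℂ => F (U.submatrix f g) :=
    hF.comp (by fun_prop)
  have hsub (U : Matrix (Fin m) (Fin m) ℂ) :
      U.submatrix f' g' = (U.submatrix σ τ).submatrix f g := by
    ext i j; simp [hσ, hτ]
  have hstar := measurePreserving_star_of_mul_left continuous_star.measurable hsupp hinv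
  have hperm := measurePreserving_submatrix_perm hsupp hinv σ τ
  simp_rw [hsub]
  rw [hstar.integral_comp_of_aestronglyMeasurable hF'.aestronglyMeasurable,
    hperm.integral_comp_of_aestronglyMeasurable hF'.aestronglyMeasurable]

end UnitaryHaar

theorem ergCap_eq_integral_capacityIntegrand (m : ℕ) (μ : Measure (Matrix (Fin m) (Fin m) ℂ))
    (ρ : ℝ) (t r : ℕ) (ht : t ≤ m) (hr : r ≤ m) :
    ergCap m μ ρ t r ht hr =
      ∫ U, capacityIntegrand ρ (U.submatrix (Fin.castLEEmb hr) (Fin.castLEEmb ht)) ∂μ :=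
  rfl

theorem ergodic_capacity_decomposition_general (m mt mr : ℕ) (ht : mt ≤ m) (hr : mr ≤ m)
    (μ : Measure (Matrix (Fin m) (Fin m) ℂ)) [IsProbabilityMeasure μ]
    (hsupp : ∀ᵐ U ∂μ, U ∈ Matrix.unitaryGroup (Fin m) ℂ)
    (hinv : ∀ V ∈ Matrix.unitaryGroup (Fin m) ℂ,
      MeasurePreserving (fun U => V * U) μ μ)
    (ρ : ℝ) (hρ : 0 ≤ ρ) :
    ergCap m μ ρ mt mr ht hr =
      ((mt : ℝ) + mr - m) * Real.log (1 + ρ) +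
        ergCap m μ ρ (m - mr) (m - mt) (Nat.sub_le m mr) (Nat.sub_le m mt) := by
  set lowerRows := Function.Embedding.inr.trans (finSumFinSubEquiv hr).toEmbedding
  set lowerCols := Function.Embedding.inr.trans (finSumFinSubEquiv ht).toEmbedding
  have hcont := continuous_capacityIntegrand (ι := Fin (m - mt)) (κ := Fin (m - mr)) hρ
  have hint :
      Integrable (fun U => capacityIntegrand ρ ((star U).submatrix lowerCols lowerRows)) μ :=
    (hcont.comp (by fun_prop)).integrable_of_ae_mem_isCompact isCompact_unitaryGroup hsupp
  have hpoint : ∀ᵐ U ∂μ, capacityIntegrand ρ (U.submatrix (Fin.castLEEmb hr) (Fin.castLEEmb ht)) =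
      ((mt : ℝ) - (m - mr : ℕ)) * Real.log (1 + ρ) +
        capacityIntegrand ρ ((star U).submatrix lowerCols lowerRows) :=
    hsupp.mono fun U hU => by linarith [capacityIntegrand_corner_add ht hr hU hρ]
  rw [ergCap_eq_integral_capacityIntegrand, ergCap_eq_integral_capacityIntegrand,
    integral_congr_ae hpoint, integral_add (integrable_const _) hint, integral_const,
    integral_star_submatrix_eq hsupp hinv lowerCols (Fin.castLEEmb (Nat.sub_le m mt)) lowerRows
      (Fin.castLEEmb (Nat.sub_le m mr)) hcont, Nat.cast_sub hr, probReal_univ, one_smul]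
  ring

/-- Decomposition of the ergodic capacity of the Jacobi MIMO channel in the
regime `m < m_r + m_t`:
`C(m_t, m_r, m, ρ) = (m_t + m_r - m) ln(1+ρ) + C(m - m_r, m - m_t, m, ρ)`,
where `μ` is the Haar (probability) measure on the unitary group, formalized as
a left-invariant probability measure carried by the unitary matrices. -/
theorem ergodic_capacity_decomposition (m mt mr : ℕ)
    (hmt : 0 < mt) (hmr : 0 < mr) (ht : mt ≤ m) (hr : mr ≤ m) (hm : m < mr + mt)
    (μ : Measure (Matrix (Fin m) (Fin m) ℂ)) [IsProbabilityMeasure μ]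
    (hsupp : ∀ᵐ U ∂μ, U ∈ Matrix.unitaryGroup (Fin m) ℂ)
    (hinv : ∀ V ∈ Matrix.unitaryGroup (Fin m) ℂ,
      MeasurePreserving (fun U => V * U) μ μ)
    (ρ : ℝ) (hρ : 0 ≤ ρ) :
    ergCap m μ ρ mt mr ht hr =
      ((mt : ℝ) + mr - m) * Real.log (1 + ρ) +
        ergCap m μ ρ (m - mr) (m - mt) (Nat.sub_le m mr) (Nat.sub_le m mt) :=
  ergodic_capacity_decomposition_general m mt mr ht hr μ hsupp hinv ρ hρ
end
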